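/- arXiv:2001.04823 — 3 statements merged into one kernel-verified Lean document; each statement's English description precedes it below -/
import Mathlib

section
/- Let A be a Gelfand ring. Then every purely-prime ideal of A is purely-maximal. -/
variable {A : Type*} [CommRing A]

/-- An ideal `I` is pure if for every `f ∈ I` there exists `g ∈ I` with `f * (1 - g) = 0`. -/
def Ideal.IsPure (I : Ideal A) : Prop :=
  ∀ f ∈ I, ∃ g ∈ I, f * (1 - g) = 0

/-- The pure part `ν(I)`: the largest pure ideal contained in `I`
(the sum of all pure ideals contained in `I`). -/
def Ideal.purePart (I : Ideal A) : Ideal A :=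
  sSup {J : Ideal A | J.IsPure ∧ J ≤ I}

/-- A purely-prime ideal: a proper pure ideal `P` such that whenever `I`, `J` are pure ideals
with `I * J ≤ P`, either `I ≤ P` or `J ≤ P`. -/
def Ideal.IsPurelyPrime (P : Ideal A) : Prop :=
  P.IsPure ∧ P ≠ ⊤ ∧
    ∀ I J : Ideal A, I.IsPure → J.IsPure → I * J ≤ P → I ≤ P ∨ J ≤ P

/-- A purely-maximal ideal: a maximal element of the set of proper pure ideals. -/
def Ideal.IsPurelyMaximal (P : Ideal A) : Prop :=
  P.IsPure ∧ P ≠ ⊤ ∧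
    ∀ Q : Ideal A, Q.IsPure → Q ≠ ⊤ → P ≤ Q → P = Q

/-- A Gelfand ring: every prime ideal is contained in a unique maximal ideal. -/
def IsGelfandRing (A : Type*) [CommRing A] : Prop :=
  ∀ p : Ideal A, p.IsPrime → ∃! m : Ideal A, m.IsMaximal ∧ p ≤ m

/-- An mp-ring: every prime ideal contains a unique minimal prime ideal. -/
def IsMpRing (A : Type*) [CommRing A] : Prop :=
  ∀ p : Ideal A, p.IsPrime → ∃! q : Ideal A, q ∈ minimalPrimes A ∧ q ≤ p

/-- The kernel of the canonical map `A → A_p` to the localization at a prime `p`. -/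
def Ideal.kerPi (p : Ideal A) (hp : p.IsPrime) : Ideal A :=
  letI := hp
  RingHom.ker (algebraMap A (Localization.AtPrime p))

/-- The unit part `u(I) = {f : f = f * g for some g ∈ I}`. -/
def Ideal.unitPart (I : Ideal A) : Ideal A where
  carrier := {f | ∃ g ∈ I, f = f * g}
  zero_mem' := ⟨0, I.zero_mem, by ring⟩
  add_mem' := by
    rintro a b ⟨g, hg, ha⟩ ⟨h, hh, hb⟩
    exact ⟨g + h - g * h, I.sub_mem (I.add_mem hg hh) (I.mul_mem_right h hg),
      by linear_combination (1 - h) * ha + (1 - g) * hb⟩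
  smul_mem' := by
    rintro c a ⟨g, hg, ha⟩
    exact ⟨g, hg, by rw [smul_eq_mul]; linear_combination c * ha⟩

/-!
In a Gelfand ring, if `I ⊄ m` for a maximal ideal `m`, then some `x ∉ m` satisfies `x = x * t`
with `t ∈ I`: otherwise a prime `p` avoiding all `x * (1 - t)` would lie in `m` while `p + I` lies
in a second maximal ideal. So the unit part `u(I)` is pure and escapes every maximal ideal that
`I` escapes. If a purely-prime `P` lay in maximal ideals `m ≠ n`, take such `x ∉ m` with `t ∈ n`;
for `b = 1 - t ∉ n` the pure ideals `u(Ann b)` and `u((b))` multiply to zero but escape `m` and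
`n` respectively. Hence `P` lies in a single maximal ideal `m`, and a proper pure `Q ⊇ P` lies in
`P`: for `f ∈ Q` with `f * (1 - g) = 0` and `g ∈ Q ⊆ m`, the ideal `(P : f)` contains `1 - g ∉ m`,
so it is not inside `m`, the only maximal ideal above `P`.
-/

namespace Ideal

theorem one_sub_notMem {I : Ideal A} (hI : I ≠ ⊤) {t : A} (ht : t ∈ I) : 1 - t ∉ I :=
  fun h => hI ((eq_top_iff_one I).2 (sub_add_cancel (1 : A) t ▸ I.add_mem h ht))

theorem unitPart_le (I : Ideal A) : I.unitPart ≤ I := by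
  rintro f ⟨g, hg, hfg⟩
  rw [hfg]
  exact I.mul_mem_left f hg

theorem IsPure.le_of_subsingleton_maximal {P Q : Ideal A} (hQ : Q.IsPure) (hQtop : Q ≠ ⊤)
    (hPQ : P ≤ Q) (hP : {m : Ideal A | m.IsMaximal ∧ P ≤ m}.Subsingleton) : Q ≤ P := by
  obtain ⟨n, hn, hQn⟩ := exists_le_maximal Q hQtop
  intro f hf
  obtain ⟨g, hg, hfg⟩ := hQ f hf
  by_contra hfP
  have hcolon : P.colon (span {f}) ≠ ⊤ := fun h => hfP <| by
    simpa using Submodule.mem_colon_span_singleton.1 (h ▸ Submodule.mem_top : (1 : A) ∈ _)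
  obtain ⟨k, hk, hle⟩ := exists_le_maximal _ hcolon
  have hPk : P ≤ k := fun y hy =>
    hle (Submodule.mem_colon_span_singleton.2 (P.mul_mem_right f hy))
  have hkn : k = n := hP ⟨hk, hPk⟩ ⟨hn, hPQ.trans hQn⟩
  have h1g : 1 - g ∈ k := hle <| Submodule.mem_colon_span_singleton.2 <| by
    rw [smul_eq_mul, mul_comm, hfg]
    exact P.zero_mem
  exact one_sub_notMem hk.ne_top (hkn ▸ hQn hg) h1g

end Ideal

open Ideal

namespace IsGelfandRing

theorem unitPart_not_le (hA : IsGelfandRing A) {m I : Ideal A} (hm : m.IsMaximal)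
    (hI : ¬I ≤ m) : ¬I.unitPart ≤ m := by
  intro hle
  let T : Submonoid A :=
    { carrier := {a | ∃ x ∉ m, ∃ t ∈ I, a = x * (1 - t)}
      one_mem' := ⟨1, (ne_top_iff_one m).1 hm.ne_top, 0, I.zero_mem, by ring⟩
      mul_mem' := by
        rintro _ _ ⟨x, hx, t, ht, rfl⟩ ⟨y, hy, s, hs, rfl⟩
        exact ⟨x * y, hm.isPrime.mul_notMem hx hy, t + s - t * s,
          I.sub_mem (I.add_mem ht hs) (I.mul_mem_right s ht), by ring⟩ }
  have hT : Disjoint ((⊥ : Ideal A) : Set A) T := by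
    refine Set.disjoint_left.2 ?_
    rintro _ h0 ⟨x, hx, t, ht, rfl⟩
    exact hx (hle ⟨t, ht, by linear_combination mem_bot.1 h0⟩)
  obtain ⟨p, hp, -, hpT⟩ := exists_le_prime_disjoint ⊥ T hT
  have hpm : p ≤ m := fun x hx => by_contra fun hxm =>
    Set.disjoint_left.1 hpT hx ⟨x, hxm, 0, I.zero_mem, by ring⟩
  have hpI : p ⊔ I ≠ ⊤ := by
    rw [Ne, eq_top_iff_one, Submodule.mem_sup]
    rintro ⟨q, hq, t, ht, hqt⟩
    exact Set.disjoint_left.1 hpT hq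
      ⟨1, (ne_top_iff_one m).1 hm.ne_top, t, ht, by linear_combination hqt⟩
  obtain ⟨n, hn, hpIn⟩ := exists_le_maximal _ hpI
  have hmn : m = n := (hA p hp).unique ⟨hm, hpm⟩ ⟨hn, le_sup_left.trans hpIn⟩
  exact hI (hmn ▸ le_sup_right.trans hpIn)

theorem isPure_unitPart (hA : IsGelfandRing A) (K : Ideal A) : K.unitPart.IsPure := by
  rintro z ⟨y, hy, hzy⟩
  have hsup : (span {z}).annihilator ⊔ K.unitPart = ⊤ := by
    by_contra hne
    obtain ⟨k, hk, hle⟩ := exists_le_maximal _ hne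
    have h1y : 1 - y ∈ k := hle <| mem_sup_left <|
      (Submodule.mem_annihilator_span_singleton _ _).2 <| by
        rw [smul_eq_mul]
        linear_combination hzy
    have hyk : y ∉ k := fun hyk => one_sub_notMem hk.ne_top hyk h1y
    exact hA.unitPart_not_le hk (fun hKk => hyk (hKk hy)) (le_sup_right.trans hle)
  obtain ⟨a, ha, g, hg, hag⟩ := Submodule.mem_sup.1 (hsup ▸ Submodule.mem_top : (1 : A) ∈ _)
  refine ⟨g, hg, ?_⟩
  rw [← hag, add_sub_cancel_right, mul_comm]
  exact (Submodule.mem_annihilator_span_singleton _ _).1 ha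

theorem subsingleton_maximal_of_isPurelyPrime (hA : IsGelfandRing A) {P : Ideal A}
    (hP : P.IsPurelyPrime) : {m : Ideal A | m.IsMaximal ∧ P ≤ m}.Subsingleton := by
  rintro m ⟨hm, hPm⟩ n ⟨hn, hPn⟩
  by_contra hmn
  obtain ⟨x, ⟨t, htn, hxt⟩, hxm⟩ := SetLike.not_le_iff_exists.1 <|
    hA.unitPart_not_le hm fun hnm => hmn (hn.eq_of_le hm.ne_top hnm).symm
  set b := 1 - t
  have hbn : b ∉ n := one_sub_notMem hn.ne_top htn
  have hxb : x ∈ (span {b}).annihilator := by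
    rw [Submodule.mem_annihilator_span_singleton, smul_eq_mul]
    linear_combination hxt
  have hmul : (span {b}).annihilator.unitPart * (span {b}).unitPart ≤ P := calc
    _ ≤ (span {b}).annihilator * span {b} := mul_mono (unitPart_le _) (unitPart_le _)
    _ = ⊥ := Submodule.annihilator_mul _
    _ ≤ P := bot_le
  rcases hP.2.2 _ _ (hA.isPure_unitPart _) (hA.isPure_unitPart _) hmul with h | h
  · exact hA.unitPart_not_le hm (fun hle => hxm (hle hxb)) (h.trans hPm)
  · exact hA.unitPart_not_le hn (fun hle => hbn (hle (mem_span_singleton_self b))) (h.trans hPn)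

end IsGelfandRing

/-- In a Gelfand ring every purely-prime ideal is purely-maximal. -/
theorem purelyPrime_isPurelyMaximal_of_gelfand (hA : IsGelfandRing A)
    (P : Ideal A) (hP : P.IsPurelyPrime) : P.IsPurelyMaximal := by
  refine ⟨hP.1, hP.2.1, fun Q hQ hQtop hPQ => le_antisymm hPQ ?_⟩
  exact hQ.le_of_subsingleton_maximal hQtop hPQ (hA.subsingleton_maximal_of_isPurelyPrime hP)
end

section
/- Let A be an mp-ring. Then the purely-maximal ideals of A are precisely the ideals of the form ν(p) where p is a minimal prime ideal of A; that is, for every minimal prime p of A, ν(p) is purely-maximal, and every purely-maximal ideal of A equals ν(p) for some minimal prime p. -/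
variable {A : Type*} [CommRing A]

/-!
For a prime `p` let `K = ker (A → A_p)`. In an mp-ring, `g * t = 0` forces
`Ann(g^∞) + Ann(t^∞) = A`: a maximal ideal containing both annihilators would contain a minimal
prime avoiding `g` and one avoiding `t`; by the mp property these coincide, which is absurd as
that prime contains `g * t = 0`.
Splitting `1 = u + v` accordingly, each `g ∈ K` satisfies `g ^ a = g ^ a * v` with `v ∈ K`, so
some power of every element of `K` lies in the unit part `u(K)`, which makes `u(K)` a pure ideal
inside `p`; thus `K ⊆ √ν(p)`. For minimal primes `p ≠ q` one has `K ⊄ q`, hence `ν(p) ⊄ q`, and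
since every proper pure ideal lies in some minimal prime, `ν(p)` is purely-maximal and every
purely-maximal ideal is some `ν(q)`.
-/

namespace Ideal

theorem mem_unitPart {I : Ideal A} {f : A} : f ∈ I.unitPart ↔ ∃ g ∈ I, f = f * g :=
  Iff.rfl

theorem unitPart_mono : Monotone (unitPart : Ideal A → Ideal A) := by
  rintro I J hIJ f ⟨g, hg, hf⟩
  exact ⟨g, hIJ hg, hf⟩

theorem isPure_iff_le_unitPart {I : Ideal A} : I.IsPure ↔ I ≤ I.unitPart := by
  simp only [IsPure, SetLike.le_def, mem_unitPart, mul_one_sub, sub_eq_zero]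

theorem isPure_sSup {S : Set (Ideal A)} (h : ∀ J ∈ S, J.IsPure) : (sSup S).IsPure :=
  isPure_iff_le_unitPart.mpr <| sSup_le fun J hJ =>
    (isPure_iff_le_unitPart.mp (h J hJ)).trans (unitPart_mono (le_sSup hJ))

theorem isPure_purePart (I : Ideal A) : I.purePart.IsPure :=
  isPure_sSup fun _ hJ => hJ.1

theorem purePart_le (I : Ideal A) : I.purePart ≤ I :=
  sSup_le fun _ hJ => hJ.2

theorem IsPure.le_purePart {I J : Ideal A} (hJ : J.IsPure) (h : J ≤ I) : J ≤ I.purePart :=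
  le_sSup ⟨hJ, h⟩

theorem isPure_unitPart_of_le_radical {I : Ideal A} (h : I ≤ I.unitPart.radical) :
    I.unitPart.IsPure := by
  rw [isPure_iff_le_unitPart]
  rintro f ⟨g, hg, hf⟩
  obtain ⟨n, hn⟩ := h hg
  refine ⟨g ^ n, hn, ?_⟩
  clear hn
  induction n with
  | zero => simp
  | succ n ih => rw [pow_succ, ← mul_assoc, ← ih, ← hf]

theorem IsPure.le_of_isPrime_of_le {J P Q : Ideal A} (hJ : J.IsPure) (hP : P ≠ ⊤) (hQ : Q.IsPrime)
    (hJP : J ≤ P) (hQP : Q ≤ P) : J ≤ Q := by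
  intro f hf
  obtain ⟨g, hg, hfg⟩ := hJ f hf
  refine (hQ.mem_or_mem (hfg ▸ Q.zero_mem)).resolve_right fun h => hP ?_
  rw [eq_top_iff_one, ← sub_add_cancel 1 g]
  exact P.add_mem (hQP h) (hJP hg)

theorem IsPure.exists_le_mem_minimalPrimes {J : Ideal A} (hJ : J.IsPure) (hJ_top : J ≠ ⊤) :
    ∃ q ∈ minimalPrimes A, J ≤ q := by
  obtain ⟨m, hm, hJm⟩ := exists_le_maximal J hJ_top
  obtain ⟨q, hq, hqm⟩ := exists_minimalPrimes_le (bot_le : (⊥ : Ideal A) ≤ m)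
  exact ⟨q, hq, hJ.le_of_isPrime_of_le hm.ne_top hq.1.1 hJm hqm⟩

theorem exists_minimalPrimes_le_notMem {m : Ideal A} [m.IsPrime] {g : A}
    (h : ∀ s ∉ m, ∀ n : ℕ, s * g ^ n ≠ 0) : ∃ q ∈ minimalPrimes A, q ≤ m ∧ g ∉ q := by
  have hdisj : Disjoint ((⊥ : Ideal A) : Set A) ↑(m.primeCompl ⊔ Submonoid.powers g) := by
    rw [Set.disjoint_left]
    rintro _ rfl hS
    obtain ⟨s, hs, _, ⟨n, rfl⟩, hsg⟩ := Submonoid.mem_sup.mp hS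
    exact h s hs n hsg
  obtain ⟨P, hP, -, hPS⟩ := exists_le_prime_disjoint ⊥ _ hdisj
  have hPm : P ≤ m := fun x hxP => by_contra fun hxm =>
    Set.disjoint_left.mp hPS hxP (Submonoid.mem_sup_left (show x ∈ m.primeCompl from hxm))
  have hgP : g ∉ P := fun hgP =>
    Set.disjoint_left.mp hPS hgP (Submonoid.mem_sup_right (Submonoid.mem_powers g))
  obtain ⟨q, hq, hqP⟩ := exists_minimalPrimes_le (bot_le : (⊥ : Ideal A) ≤ P)
  exact ⟨q, hq, hqP.trans hPm, fun hgq => hgP (hqP hgq)⟩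

theorem exists_notMem_mul_pow_eq_zero_of_mem_minimalPrimes {q : Ideal A}
    (hq : q ∈ minimalPrimes A) {x : A} (hx : x ∈ q) : ∃ s ∉ q, ∃ n : ℕ, s * x ^ n = 0 := by
  have := hq.1.1
  by_contra! h
  obtain ⟨q', hq', hq'q, hxq'⟩ := exists_minimalPrimes_le_notMem h
  exact hxq' (hq.2 ⟨hq'.1.1, bot_le⟩ hq'q hx)

theorem mem_kerPi {p : Ideal A} (hp : p.IsPrime) {x : A} :
    x ∈ p.kerPi hp ↔ ∃ s ∉ p, s * x = 0 := by
  simp only [kerPi, RingHom.mem_ker, IsLocalization.map_eq_zero_iff p.primeCompl, Subtype.exists,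
    mem_primeCompl_iff, exists_prop]

theorem kerPi_le {p : Ideal A} (hp : p.IsPrime) : p.kerPi hp ≤ p := by
  intro x hx
  obtain ⟨s, hs, hsx⟩ := (mem_kerPi hp).mp hx
  exact (hp.mem_or_mem (hsx ▸ p.zero_mem)).resolve_left hs

theorem kerPi_not_le_of_mem_minimalPrimes {p q : Ideal A} (hp : p ∈ minimalPrimes A)
    (hq : q ∈ minimalPrimes A) (hne : p ≠ q) : ¬ p.kerPi hp.1.1 ≤ q := by
  obtain ⟨x, hxq, hxp⟩ := SetLike.not_le_iff_exists.mp
    fun hqp => hne (le_antisymm (hp.2 hq.1 hqp) hqp)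
  obtain ⟨s, hsq, n, hs⟩ := exists_notMem_mul_pow_eq_zero_of_mem_minimalPrimes hq hxq
  have hxn : x ^ n ∉ p := fun h => hxp (hp.1.1.mem_of_pow_mem n h)
  exact fun hle => hsq (hle ((mem_kerPi hp.1.1).mpr ⟨x ^ n, hxn, by rw [mul_comm, hs]⟩))

end Ideal

open Ideal

theorem mem_ker_algebraMap_away {g x : A} :
    x ∈ RingHom.ker (algebraMap A (Localization.Away g)) ↔ ∃ n : ℕ, x * g ^ n = 0 := by
  rw [RingHom.mem_ker, IsLocalization.map_eq_zero_iff (Submonoid.powers g)]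
  constructor
  · rintro ⟨⟨_, n, rfl⟩, h⟩
    exact ⟨n, (mul_comm _ _).trans h⟩
  · rintro ⟨n, h⟩
    exact ⟨⟨g ^ n, n, rfl⟩, (mul_comm _ _).trans h⟩

theorem IsMpRing.ker_algebraMap_away_sup_eq_top (hA : IsMpRing A) {g t : A} (h : g * t = 0) :
    RingHom.ker (algebraMap A (Localization.Away g)) ⊔
      RingHom.ker (algebraMap A (Localization.Away t)) = ⊤ := by
  by_contra hne
  obtain ⟨m, hm, hle⟩ := exists_le_maximal _ hne
  have := hm.isPrime
  have avoid : ∀ y : A, RingHom.ker (algebraMap A (Localization.Away y)) ≤ m →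
      ∃ q ∈ minimalPrimes A, q ≤ m ∧ y ∉ q := fun y hy =>
    exists_minimalPrimes_le_notMem fun s hs n hsy => hs (hy (mem_ker_algebraMap_away.mpr ⟨n, hsy⟩))
  obtain ⟨q₁, hq₁, hq₁m, hgq₁⟩ := avoid g (le_sup_left.trans hle)
  obtain ⟨q₂, hq₂, hq₂m, htq₂⟩ := avoid t (le_sup_right.trans hle)
  obtain ⟨q, -, hq⟩ := hA m hm.isPrime
  have hq₁₂ : q₁ = q₂ := (hq q₁ ⟨hq₁, hq₁m⟩).trans (hq q₂ ⟨hq₂, hq₂m⟩).symm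
  rcases hq₁.1.1.mem_or_mem (h ▸ q₁.zero_mem) with hg | ht
  · exact hgq₁ hg
  · exact htq₂ (hq₁₂ ▸ ht)

theorem IsMpRing.kerPi_le_radical_unitPart (hA : IsMpRing A) {p : Ideal A} (hp : p.IsPrime) :
    p.kerPi hp ≤ (p.kerPi hp).unitPart.radical := by
  intro g hg
  obtain ⟨s, hs, hsg⟩ := (mem_kerPi hp).mp hg
  have hsup := hA.ker_algebraMap_away_sup_eq_top (show g * s = 0 by rw [mul_comm, hsg])
  obtain ⟨u, hu, v, hv, huv⟩ := Submodule.mem_sup.mp (Submodule.eq_top_iff'.mp hsup 1)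
  obtain ⟨a, hua⟩ := mem_ker_algebraMap_away.mp hu
  obtain ⟨b, hvb⟩ := mem_ker_algebraMap_away.mp hv
  have hvp : v ∈ p.kerPi hp :=
    (mem_kerPi hp).mpr ⟨s ^ b, fun h => hs (hp.mem_of_pow_mem b h), by rw [mul_comm, hvb]⟩
  exact ⟨a, v, hvp, by linear_combination hua - g ^ a * huv⟩

theorem IsMpRing.kerPi_le_radical_purePart (hA : IsMpRing A) {p : Ideal A} (hp : p.IsPrime) :
    p.kerPi hp ≤ p.purePart.radical := by
  have h := hA.kerPi_le_radical_unitPart hp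
  refine h.trans (radical_mono ((isPure_unitPart_of_le_radical h).le_purePart ?_))
  exact (unitPart_le _).trans (kerPi_le hp)

theorem IsMpRing.purePart_not_le (hA : IsMpRing A) {p q : Ideal A} (hp : p ∈ minimalPrimes A)
    (hq : q ∈ minimalPrimes A) (hne : p ≠ q) : ¬ p.purePart ≤ q := fun hle =>
  kerPi_not_le_of_mem_minimalPrimes hp hq hne <|
    (hA.kerPi_le_radical_purePart hp.1.1).trans (hq.1.1.radical_le_iff.mpr hle)

/-- The purely-maximal ideals of an mp-ring are precisely the ideals
`ν(p)` with `p` a minimal prime. -/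
theorem purelyMaximal_iff_purePart_minimalPrime_of_mp (hA : IsMpRing A) :
    (∀ p ∈ minimalPrimes A, (Ideal.purePart p).IsPurelyMaximal) ∧
    (∀ M : Ideal A, M.IsPurelyMaximal → ∃ p ∈ minimalPrimes A, M = p.purePart) := by
  have purePart_ne_top : ∀ p ∈ minimalPrimes A, p.purePart ≠ ⊤ := fun p hp =>
    ne_top_of_le_ne_top hp.1.1.ne_top (purePart_le p)
  refine ⟨fun p hp => ⟨isPure_purePart p, purePart_ne_top p hp, ?_⟩, ?_⟩
  · intro Q hQ hQ_top hle
    obtain ⟨q, hq, hQq⟩ := hQ.exists_le_mem_minimalPrimes hQ_top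
    obtain rfl : p = q := by_contra fun hne => hA.purePart_not_le hp hq hne (hle.trans hQq)
    exact le_antisymm hle (hQ.le_purePart hQq)
  · rintro M ⟨hM, hM_top, hM_max⟩
    obtain ⟨q, hq, hMq⟩ := hM.exists_le_mem_minimalPrimes hM_top
    exact ⟨q, hq, hM_max _ (isPure_purePart q) (purePart_ne_top q hq) (hM.le_purePart hMq)⟩
end

section
/- (Cohen type theorem) Let A be a commutative ring in which every purely-maximal ideal is finitely generated. Then A is semi-Noetherian, i.e., every pure ideal of A is finitely generated. -/
/-!
Among the pure ideals that are not finitely generated, Zorn's lemma yields a maximal one `M`: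
a directed union of pure ideals is pure, and it is finitely generated only if it equals one of
its members. Such an `M` is purely-maximal. Indeed, if `M < Q` with `Q` pure and proper, then
`Q` is finitely generated, hence `Q = (e)` for an idempotent `e`, and the pure ideal
`M' = M + (1 - e)` strictly contains `M`, so it is finitely generated too. But `M = M' * Q`,
so `M` would be finitely generated.
-/

variable {A : Type*} [CommRing A]

namespace Ideal

variable {I J M Q : Ideal A}

theorem IsPure.isIdempotentElem (hI : I.IsPure) : IsIdempotentElem I := by
  refine le_antisymm mul_le_right fun f hf => ?_
  obtain ⟨g, hg, hfg⟩ := hI f hf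
  have hf_eq : f = f * g := by linear_combination hfg
  exact hf_eq ▸ mul_mem_mul hf hg

theorem IsPure.exists_isIdempotentElem_eq_span (hI : I.IsPure) (hfg : I.FG) :
    ∃ e : A, IsIdempotentElem e ∧ I = span {e} :=
  (I.isIdempotentElem_iff_of_fg hfg).mp hI.isIdempotentElem

theorem isPure_span_singleton_of_isIdempotentElem {e : A} (he : IsIdempotentElem e) :
    (span {e}).IsPure := by
  intro f hf
  obtain ⟨a, rfl⟩ := mem_span_singleton'.mp hf
  exact ⟨e, mem_span_singleton_self e, by linear_combination (-a) * he.eq⟩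

theorem IsPure.sup (hI : I.IsPure) (hJ : J.IsPure) : (I ⊔ J).IsPure := by
  intro f hf
  obtain ⟨x, hx, y, hy, rfl⟩ := Submodule.mem_sup.mp hf
  obtain ⟨g, hg, hxg⟩ := hI x hx
  obtain ⟨h, hh, hyh⟩ := hJ y hy
  refine ⟨g + h - g * h, sub_mem (add_mem (mem_sup_left hg) (mem_sup_right hh))
    (mul_mem_right h _ (mem_sup_left hg)), ?_⟩
  linear_combination (1 - h) * hxg + (1 - g) * hyh

theorem IsPure.mul_eq_left_of_le (hQ : Q.IsPure) (hMQ : M ≤ Q) : M * Q = M := by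
  refine le_antisymm mul_le_left fun m hm => ?_
  obtain ⟨g, hg, hmg⟩ := hQ m (hMQ hm)
  have hm_eq : m = m * g := by linear_combination hmg
  exact hm_eq ▸ mul_mem_mul hm hg

theorem isPure_sSup_of_directedOn {c : Set (Ideal A)} (hne : c.Nonempty)
    (hdir : DirectedOn (· ≤ ·) c) (hc : ∀ J ∈ c, J.IsPure) : (sSup c).IsPure := by
  intro f hf
  obtain ⟨J, hJc, hfJ⟩ := (Submodule.mem_sSup_of_directed hne hdir).mp hf
  obtain ⟨g, hg, hfg⟩ := hc J hJc f hfJ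
  exact ⟨g, le_sSup hJc hg, hfg⟩

theorem sSup_mem_of_directedOn_of_fg {c : Set (Ideal A)} (hne : c.Nonempty)
    (hdir : DirectedOn (· ≤ ·) c) (hfg : (sSup c).FG) : sSup c ∈ c := by
  obtain ⟨J, hJc, hle⟩ := (CompleteLattice.isCompactElement_iff_le_of_directed_sSup_le _ _).mp
    ((Submodule.fg_iff_compact _).mp hfg) c hne hdir le_rfl
  exact le_antisymm hle (le_sSup hJc) ▸ hJc

theorem fg_of_lt_of_forall_gt_fg (hM : M.IsPure) (hQ : Q.IsPure) (hQ_top : Q ≠ ⊤) (hMQ : M < Q)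
    (hgt : ∀ J : Ideal A, J.IsPure → M < J → J.FG) : M.FG := by
  obtain ⟨e, he, rfl⟩ := hQ.exists_isIdempotentElem_eq_span (hgt _ hQ hMQ)
  set M' := M ⊔ span {1 - e}
  have h_one_sub_notMem : 1 - e ∉ M := fun h => hQ_top <| (eq_top_iff_one _).mpr <| by
    simpa using add_mem (mem_span_singleton_self e) (hMQ.le h)
  have hM_lt : M < M' := lt_of_le_of_ne le_sup_left fun h =>
    h_one_sub_notMem (h ▸ mem_sup_right (mem_span_singleton_self _))
  have hM'_fg : M'.FG :=
    hgt M' (hM.sup (isPure_span_singleton_of_isIdempotentElem he.one_sub)) hM_lt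
  have hM_eq : M' * span {e} = M := by
    rw [sup_mul, hQ.mul_eq_left_of_le hMQ.le, span_singleton_mul_span_singleton,
      he.one_sub_mul_self, span_singleton_zero, sup_bot_eq]
  exact hM_eq ▸ hM'_fg.mul (hgt _ hQ hMQ)

theorem exists_maximal_isPure_not_fg {I : Ideal A} (hI : I.IsPure) (hI_fg : ¬I.FG) :
    ∃ M : Ideal A, Maximal (fun J : Ideal A => J.IsPure ∧ ¬J.FG) M := by
  obtain ⟨M, -, hM⟩ := zorn_le_nonempty₀ {J : Ideal A | J.IsPure ∧ ¬J.FG}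
    (fun c hc hchain J hJ => ⟨sSup c,
      ⟨isPure_sSup_of_directedOn ⟨J, hJ⟩ hchain.directedOn fun K hK => (hc hK).1,
        fun hfg => (hc (sSup_mem_of_directedOn_of_fg ⟨J, hJ⟩ hchain.directedOn hfg)).2 hfg⟩,
      fun _ => le_sSup⟩) I ⟨hI, hI_fg⟩
  exact ⟨M, hM⟩

theorem isPurelyMaximal_of_maximal_not_fg
    (hM : Maximal (fun J : Ideal A => J.IsPure ∧ ¬J.FG) M) : M.IsPurelyMaximal := by
  obtain ⟨⟨hM_pure, hM_fg⟩, hM_max⟩ := hM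
  refine ⟨hM_pure, fun htop => hM_fg (htop ▸ ⟨{1}, by simp⟩), fun Q hQ hQ_top hMQ => ?_⟩
  by_contra hne
  have hgt : ∀ J : Ideal A, J.IsPure → M < J → J.FG := fun J hJ hMJ => by
    by_contra hJ_fg
    exact hMJ.ne (le_antisymm hMJ.le (hM_max ⟨hJ, hJ_fg⟩ hMJ.le))
  exact hM_fg (fg_of_lt_of_forall_gt_fg hM_pure hQ hQ_top (lt_of_le_of_ne hMQ hne) hgt)

end Ideal

/-- Cohen type theorem: if every purely-maximal ideal of `A` is finitely
generated, then every pure ideal of `A` is finitely generated (`A` is semi-Noetherian). -/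
theorem semiNoetherian_of_purelyMaximal_fg
    (h : ∀ M : Ideal A, M.IsPurelyMaximal → M.FG) :
    ∀ I : Ideal A, I.IsPure → I.FG := by
  intro I hI
  by_contra hI_fg
  obtain ⟨M, hM⟩ := Ideal.exists_maximal_isPure_not_fg hI hI_fg
  exact hM.prop.2 (h M (Ideal.isPurelyMaximal_of_maximal_not_fg hM))
end
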